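/- arXiv:1802.00367 — 8 statements merged into one kernel-verified Lean document; each statement's English description precedes it below -/
import Mathlib

section
/- For all natural numbers r and d, if SimplePair r d and SimplePair (r^2) (d^2) both hold, then d = r^2. In other words, among the (rank, dimension) pairs of finite-dimensional simple Euclidean Jordan algebras, only those of the complex family (d = r^2) have the property that the pair (r^2, d^2) is again realized by a simple Euclidean Jordan algebra. -/
/-!
The complex family satisfies `d = r ^ 2` outright. Every other family is excluded by a size
argument: in rank `m ≥ 4` the dimension lies between the real value `m (m + 1) / 2` and the
quaternionic value `m (2m - 1)`, while for a real (quaternionic) pair of rank `r ≥ 2` the square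
`d ^ 2` falls strictly below (above) that range for `m = r ^ 2`. The exceptional pair gives
`27 ^ 2 > 9 · 17`, and the spin factors leave only rank `4`, where `d ^ 2 ∈ {16, 10, 28}`.
-/

/-- The (rank, dimension) pairs of finite-dimensional simple Euclidean Jordan
algebras, by the Jordan–von Neumann–Wigner classification: complex hermitian,
real symmetric, quaternionic hermitian matrix algebras, the exceptional
octonionic algebra, and the spin factors. -/
def SimplePair (r d : ℕ) : Prop :=
  (∃ n, 1 ≤ n ∧ r = n ∧ d = n ^ 2) ∨
  (∃ n, 1 ≤ n ∧ r = n ∧ d = n * (n + 1) / 2) ∨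
  (∃ n, 1 ≤ n ∧ r = n ∧ d = n * (2 * n - 1)) ∨
  (r = 3 ∧ d = 27) ∨
  (∃ K, 2 ≤ K ∧ r = 2 ∧ d = K)

namespace SimplePair

/-- The classification with the truncating `/` and `-` of `ℕ` cleared. -/
theorem dim_cases {r d : ℕ} (h : SimplePair r d) :
    (1 ≤ r ∧ (d = r ^ 2 ∨ 2 * d = r * (r + 1) ∨ d + r = 2 * r ^ 2)) ∨
      (r = 3 ∧ d = 27) ∨ (r = 2 ∧ 2 ≤ d) := by
  rcases h with ⟨r, hr, rfl, rfl⟩ | ⟨r, hr, rfl, rfl⟩ | ⟨r, hr, rfl, rfl⟩ | h | ⟨K, hK, rfl, rfl⟩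
  · exact .inl ⟨hr, .inl rfl⟩
  · exact .inl ⟨hr, .inr (.inl (Nat.mul_div_cancel' (Nat.even_mul_succ_self r).two_dvd))⟩
  · refine .inl ⟨hr, .inr (.inr ?_)⟩
    calc r * (2 * r - 1) + r = r * (2 * r - 1 + 1) := by ring
      _ = 2 * r ^ 2 := by rw [Nat.sub_add_cancel (by omega)]; ring
  · exact .inr (.inl h)
  · exact .inr (.inr ⟨rfl, hK⟩)

theorem dim_cases_of_four_le {r d : ℕ} (h : SimplePair r d) (hr : 4 ≤ r) :
    d = r ^ 2 ∨ 2 * d = r * (r + 1) ∨ d + r = 2 * r ^ 2 := by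
  rcases h.dim_cases with ⟨-, hd⟩ | ⟨rfl, -⟩ | ⟨rfl, -⟩
  · exact hd
  all_goals omega

theorem dim_bounds_of_four_le {r d : ℕ} (h : SimplePair r d) (hr : 4 ≤ r) :
    r * (r + 1) ≤ 2 * d ∧ d + r ≤ 2 * r ^ 2 := by
  rcases h.dim_cases_of_four_le hr with hd | hd | hd <;> constructor <;> nlinarith

end SimplePair

theorem not_simplePair_sq_sq_of_two_mul_eq {r d : ℕ} (hr : 2 ≤ r) (hd : 2 * d = r * (r + 1)) :
    ¬ SimplePair (r ^ 2) (d ^ 2) := by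
  intro h
  have hlow := (h.dim_bounds_of_four_le (by nlinarith)).1
  have hsq : 4 * d ^ 2 = r ^ 2 * (r + 1) ^ 2 := by rw [← mul_pow, ← hd]; ring
  nlinarith [Nat.mul_le_mul hr hr]

theorem not_simplePair_sq_sq_of_add_eq {r d : ℕ} (hr : 2 ≤ r) (hd : d + r = 2 * r ^ 2) :
    ¬ SimplePair (r ^ 2) (d ^ 2) := by
  intro h
  have hhigh : (d : ℤ) ^ 2 + r ^ 2 ≤ 2 * (r ^ 2) ^ 2 := by
    exact_mod_cast (h.dim_bounds_of_four_le (by nlinarith)).2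
  have hd' : (d : ℤ) = 2 * r ^ 2 - r := by
    linear_combination (by exact_mod_cast hd : (d + r : ℤ) = 2 * r ^ 2)
  have hr' : (2 : ℤ) ≤ r := by exact_mod_cast hr
  rw [hd'] at hhigh
  nlinarith [mul_pos (by positivity : (0 : ℤ) < r ^ 2) (by nlinarith : (0 : ℤ) < (r - 1) ^ 2)]

theorem eq_four_of_simplePair_four_sq {d : ℕ} (h : SimplePair 4 (d ^ 2)) : d = 4 := by
  have hd := h.dim_cases_of_four_le le_rfl
  have : d ≤ 5 := by rcases hd with hd | hd | hd <;> nlinarith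
  interval_cases d <;> omega

/-- Among simple EJA (rank, dimension) pairs, only the complex family (d = r²)
has the property that (r², d²) is again a simple EJA pair. -/
theorem only_complex_self_composes (r d : ℕ)
    (h : SimplePair r d) (h2 : SimplePair (r ^ 2) (d ^ 2)) : d = r ^ 2 := by
  rcases h.dim_cases with ⟨hr, hd | hd | hd⟩ | ⟨rfl, rfl⟩ | ⟨rfl, -⟩
  · exact hd
  · obtain rfl | hr := hr.eq_or_lt
    · omega
    · exact absurd h2 (not_simplePair_sq_sq_of_two_mul_eq hr hd)
  · obtain rfl | hr := hr.eq_or_lt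
    · omega
    · exact absurd h2 (not_simplePair_sq_sq_of_add_eq hr hd)
  · have := (h2.dim_bounds_of_four_le (by norm_num)).2
    norm_num at this
  · exact eq_four_of_simplePair_four_sq h2
end

section
/- For every natural number K ≥ 2, if SimplePair 4 (K^2) holds then K = 4; that is, among the spin factors (rank 2, dimension K), only K = 4 (which coincides with the complex qubit algebra, i.e. the Bloch ball) admits a self-composite of rank 4 and dimension K^2 realized by a simple Euclidean Jordan algebra. -/
/-! A simple Euclidean Jordan algebra of rank 4 is a matrix algebra, so its dimension is
16, 10 or 28; of these only 16 is a perfect square. -/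

theorem simplePair_iff_of_ne_two_of_ne_three {r d : ℕ} (h2 : r ≠ 2) (h3 : r ≠ 3) :
    SimplePair r d ↔ 1 ≤ r ∧ (d = r ^ 2 ∨ d = r * (r + 1) / 2 ∨ d = r * (2 * r - 1)) := by
  unfold SimplePair
  constructor
  · rintro (⟨n, hn, rfl, rfl⟩ | ⟨n, hn, rfl, rfl⟩ | ⟨n, hn, rfl, rfl⟩ | ⟨rfl, -⟩ | ⟨K, -, rfl, -⟩)
    all_goals first | exact absurd rfl ‹_› | simp [hn]
  · rintro ⟨hr, hd | hd | hd⟩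
    exacts [Or.inl ⟨r, hr, rfl, hd⟩, Or.inr (Or.inl ⟨r, hr, rfl, hd⟩),
      Or.inr (Or.inr (Or.inl ⟨r, hr, rfl, hd⟩))]

theorem simplePair_four_iff {d : ℕ} : SimplePair 4 d ↔ d = 16 ∨ d = 10 ∨ d = 28 := by
  rw [simplePair_iff_of_ne_two_of_ne_three (by norm_num) (by norm_num)]
  norm_num

theorem spin_factor_self_composition_general (K : ℕ)
    (h : SimplePair 4 (K ^ 2)) : K = 4 := by
  rcases simplePair_four_iff.mp h with h16 | h10 | h28
  · exact Nat.pow_left_injective two_ne_zero (h16.trans (by norm_num : 16 = 4 ^ 2))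
  · exact absurd ⟨K, h10⟩ (Nat.not_exists_sq' (m := 3) (by norm_num) (by norm_num))
  · exact absurd ⟨K, h28⟩ (Nat.not_exists_sq' (m := 5) (by norm_num) (by norm_num))

/-- Among the spin factors (rank 2, dimension K), only K = 4 (the Bloch ball,
i.e. the complex qubit) admits a self-composite of rank 4 and dimension K²
realized by a simple EJA. -/
theorem spin_factor_self_composition (K : ℕ) (hK : 2 ≤ K)
    (h : SimplePair 4 (K ^ 2)) : K = 4 :=
  spin_factor_self_composition_general K h
end

section
/- Let n, k ≥ 1 and let L be a linear map from n×n complex matrices to (nk)×(nk) complex matrices (indexed by Fin n × Fin k) admitting a Kraus representation L(x) = ∑_{i∈S} K_i x K_iᴴ for a finite family of (nk)×n complex matrices K_i. If the marginal of L on the first tensor factor is the identity, i.e. Tr₂(L x) = x for every x, then there exists a positive semidefinite k×k complex matrix ρ with trace 1 such that L x = x ⊗ₖ ρ for every x. (All leaks on a fully quantum system are trivial.) -/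
/-! Collect the entries `K i (a, j) p` of the Kraus operators, for a fixed input index `p` and
output index `a`, into a `k × ι` block `B p a` (`krausBlock K p a`). Feeding the matrix unit
`e_pq` to the identity marginal shows that the blocks are orthonormal for the Hilbert–Schmidt
inner product: `tr (B p a * (B q b)ᴴ) = δ_pa δ_qb`. So `B p a = 0` for `p ≠ a`, and all diagonal
blocks equal one block `B` of unit norm, since `B a a - B b b` has norm zero. Thus every `K i` is
`1 ⊗ (column i of B)` and `L x = x ⊗ B Bᴴ`. -/

open Matrix Kronecker
open scoped ComplexOrder

/-- The partial trace over the second tensor factor. -/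
noncomputable def trace2 {n k : ℕ} (M : Matrix (Fin n × Fin k) (Fin n × Fin k) ℂ) :
    Matrix (Fin n) (Fin n) ℂ :=
  fun a b => ∑ j : Fin k, M (a, j) (b, j)

theorem Matrix.eq_of_trace_mul_conjTranspose_eq {m n R : Type*} [Fintype m] [Fintype n]
    [PartialOrder R] [NonUnitalRing R] [StarRing R] [StarOrderedRing R] [NoZeroDivisors R]
    {A B : Matrix m n R} (hA : (A * Aᴴ).trace = (B * Aᴴ).trace)
    (hB : (A * Bᴴ).trace = (B * Bᴴ).trace) : A = B := by
  rw [← sub_eq_zero, ← trace_mul_conjTranspose_self_eq_zero_iff, conjTranspose_sub,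
    Matrix.mul_sub, Matrix.sub_mul, Matrix.sub_mul, trace_sub, trace_sub, trace_sub, hA, hB,
    sub_self, sub_self, sub_self]

section KrausMap

variable {m n ι R : Type*} [Fintype ι] [Fintype n] [CommSemiring R] [StarRing R]

def krausMap (K : ι → Matrix m n R) (x : Matrix n n R) : Matrix m m R :=
  ∑ i, K i * x * (K i)ᴴ

theorem krausMap_eq_kronecker {k : Type*} [DecidableEq n] {K : ι → Matrix (n × k) n R}
    {C : Matrix k ι R} (hK : ∀ i a j b, K i (a, j) b = (1 : Matrix n n R) a b * C j i)
    (x : Matrix n n R) : krausMap K x = x ⊗ₖ (C * Cᴴ) := by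
  ext ⟨a, j⟩ ⟨b, j'⟩
  simp only [krausMap, Matrix.sum_apply, mul_apply, conjTranspose_apply, hK, kroneckerMap_apply,
    one_apply, Finset.mul_sum]
  refine Finset.sum_congr rfl fun i _ => ?_
  simp only [ite_mul, one_mul, zero_mul, Finset.sum_ite_eq, Finset.mem_univ, ↓reduceIte,
    apply_ite star, star_zero, mul_ite, mul_zero]
  ring

end KrausMap

def krausBlock {n k ι R : Type*} (K : ι → Matrix (n × k) n R) (p a : n) : Matrix k ι R :=
  of fun j i => K i (a, j) p

section Marginal

variable {n k : ℕ} {ι : Type*} [Fintype ι] {K : ι → Matrix (Fin n × Fin k) (Fin n) ℂ}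

theorem trace2_krausMap_single_apply (p q a b : Fin n) :
    trace2 (krausMap K (single p q 1)) a b = (krausBlock K p a * (krausBlock K q b)ᴴ).trace := by
  simp [trace2, krausMap, Matrix.trace, Matrix.sum_apply, mul_apply, krausBlock, single_apply,
    ite_and]

theorem trace_krausBlock_mul_conjTranspose_of_trace2 (hK : ∀ x, trace2 (krausMap K x) = x)
    (p q a b : Fin n) :
    (krausBlock K p a * (krausBlock K q b)ᴴ).trace = single p q (1 : ℂ) a b := by
  rw [← trace2_krausMap_single_apply, hK]

theorem krausBlock_eq_zero_of_trace2 (hK : ∀ x, trace2 (krausMap K x) = x)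
    {p a : Fin n} (hpa : p ≠ a) : krausBlock K p a = 0 := by
  rw [← trace_mul_conjTranspose_self_eq_zero_iff, trace_krausBlock_mul_conjTranspose_of_trace2 hK,
    single_apply_of_row_ne hpa]

theorem krausBlock_self_eq_of_trace2 (hK : ∀ x, trace2 (krausMap K x) = x)
    (a b : Fin n) : krausBlock K a a = krausBlock K b b := by
  apply eq_of_trace_mul_conjTranspose_eq <;>
    simp [trace_krausBlock_mul_conjTranspose_of_trace2 hK]

theorem apply_eq_one_mul_krausBlock_of_trace2 (hK : ∀ x, trace2 (krausMap K x) = x)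
    (a₀ : Fin n) (i : ι) (a : Fin n) (j : Fin k) (b : Fin n) :
    K i (a, j) b = (1 : Matrix (Fin n) (Fin n) ℂ) a b * krausBlock K a₀ a₀ j i := by
  rcases eq_or_ne b a with rfl | hba
  · rw [one_apply_eq, one_mul, ← krausBlock_self_eq_of_trace2 hK b a₀]
    rfl
  · rw [one_apply_ne hba.symm, zero_mul]
    exact congrFun (congrFun (krausBlock_eq_zero_of_trace2 hK hba) j) i

end Marginal

theorem quantum_leaks_are_trivial_general (n k : ℕ) (hn : 1 ≤ n)
    (L : Matrix (Fin n) (Fin n) ℂ →ₗ[ℂ] Matrix (Fin n × Fin k) (Fin n × Fin k) ℂ)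
    (hKraus : ∃ (ι : Type) (S : Finset ι)
        (K : ι → Matrix (Fin n × Fin k) (Fin n) ℂ),
        ∀ x, L x = ∑ i ∈ S, K i * x * (K i)ᴴ)
    (hmarginal : ∀ x, trace2 (L x) = x) :
    ∃ ρ : Matrix (Fin k) (Fin k) ℂ,
      ρ.PosSemidef ∧ ρ.trace = 1 ∧ ∀ x, L x = x ⊗ₖ ρ := by
  obtain ⟨ι, S, K, hK⟩ := hKraus
  let K' : S → Matrix (Fin n × Fin k) (Fin n) ℂ := fun i => K i
  have hL : ∀ x, L x = krausMap K' x := fun x => by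
    rw [hK, krausMap, Finset.sum_coe_sort S fun i => K i * x * (K i)ᴴ]
  have hid : ∀ x, trace2 (krausMap K' x) = x := fun x => hL x ▸ hmarginal x
  let a₀ : Fin n := ⟨0, hn⟩
  let C := krausBlock K' a₀ a₀
  refine ⟨C * Cᴴ, posSemidef_self_mul_conjTranspose C, ?_, fun x => ?_⟩
  · simpa using trace_krausBlock_mul_conjTranspose_of_trace2 hid a₀ a₀ a₀ a₀
  · rw [hL, krausMap_eq_kronecker (apply_eq_one_mul_krausBlock_of_trace2 hid a₀)]

/-- All leaks on a fully quantum system are trivial: a completely positive map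
`L : M_n(ℂ) → M_n(ℂ) ⊗ M_k(ℂ)` (given by a finite Kraus representation) whose
marginal on the first factor is the identity channel must be of the form
`x ↦ x ⊗ ρ` for a fixed density matrix `ρ`. -/
theorem quantum_leaks_are_trivial (n k : ℕ) (hn : 1 ≤ n) (hk : 1 ≤ k)
    (L : Matrix (Fin n) (Fin n) ℂ →ₗ[ℂ] Matrix (Fin n × Fin k) (Fin n × Fin k) ℂ)
    (hKraus : ∃ (ι : Type) (S : Finset ι)
        (K : ι → Matrix (Fin n × Fin k) (Fin n) ℂ),
        ∀ x, L x = ∑ i ∈ S, K i * x * (K i)ᴴ)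
    (hmarginal : ∀ x, trace2 (L x) = x) :
    ∃ ρ : Matrix (Fin k) (Fin k) ℂ,
      ρ.PosSemidef ∧ ρ.trace = 1 ∧ ∀ x, L x = x ⊗ₖ ρ :=
  quantum_leaks_are_trivial_general n k hn L hKraus hmarginal
end

section
/- Essential uniqueness of purification: if M and N are n×m complex matrices with M Mᴴ = N Nᴴ, then there exists an m×m unitary matrix U with N = M U. -/
/-!
`M Mᴴ = N Nᴴ` says exactly that `x ↦ Mᴴ x` and `x ↦ Nᴴ x` have the same norm at every `x`.
Hence `Mᴴ x ↦ Nᴴ x` is a well-defined linear isometry on the range of `Mᴴ`, which extends to a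
unitary `W` of the whole space. Then `W Mᴴ = Nᴴ`, that is `N = M Wᴴ`.
-/

open Matrix

namespace LinearMap

theorem exists_comp_rangeRestrict_eq {R E F G : Type*} [Ring R] [AddCommGroup E] [Module R E]
    [AddCommGroup F] [Module R F] [AddCommGroup G] [Module R G]
    (f : E →ₗ[R] F) (g : E →ₗ[R] G) (h : ker f ≤ ker g) :
    ∃ φ : range f →ₗ[R] G, ∀ x, φ (f.rangeRestrict x) = g x :=
  ⟨(ker f).liftQ g h ∘ₗ f.quotKerEquivRange.symm.toLinearMap, fun x => by
    simp only [coe_comp, LinearEquiv.coe_coe, Function.comp_apply]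
    exact congrArg ((ker f).liftQ g h) (f.quotKerEquivRange_symm_apply_image x _)⟩

theorem exists_linearIsometryEquiv_apply_eq_of_norm_eq {𝕜 E F : Type*} [RCLike 𝕜]
    [AddCommGroup E] [Module 𝕜 E] [NormedAddCommGroup F] [InnerProductSpace 𝕜 F]
    [FiniteDimensional 𝕜 F] (f g : E →ₗ[𝕜] F) (h : ∀ x, ‖f x‖ = ‖g x‖) :
    ∃ V : F ≃ₗᵢ[𝕜] F, ∀ x, V (f x) = g x := by
  have hker : ker f ≤ ker g := fun x hx => by
    rw [mem_ker, ← norm_eq_zero, ← h, norm_eq_zero, ← mem_ker]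
    exact hx
  obtain ⟨φ, hφ⟩ := exists_comp_rangeRestrict_eq f g hker
  let L : range f →ₗᵢ[𝕜] F :=
    ⟨φ, by rintro ⟨-, x, rfl⟩; exact (congrArg norm (hφ x)).trans (h x).symm⟩
  exact ⟨L.extend.toLinearIsometryEquiv rfl, fun x =>
    (L.extend_apply (f.rangeRestrict x)).trans (hφ x)⟩

end LinearMap

namespace Matrix

variable {𝕜 m n : Type*} [RCLike 𝕜] [Fintype m] [Fintype n]

theorem inner_toEuclideanLin_conjTranspose_self [DecidableEq m] [DecidableEq n]
    (A : Matrix m n 𝕜) (x : EuclideanSpace 𝕜 m) :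
    inner 𝕜 (toEuclideanLin Aᴴ x) (toEuclideanLin Aᴴ x) =
      inner 𝕜 x (toEuclideanLin (A * Aᴴ) x) := by
  rw [toLpLin_mul_same, toEuclideanLin_conjTranspose_eq_adjoint, LinearMap.adjoint_inner_left]
  rfl

theorem norm_toEuclideanLin_conjTranspose_eq [DecidableEq m] {A B : Matrix m n 𝕜}
    (h : A * Aᴴ = B * Bᴴ) (x : EuclideanSpace 𝕜 m) :
    ‖toEuclideanLin Aᴴ x‖ = ‖toEuclideanLin Bᴴ x‖ := by
  classical
  rw [norm_eq_sqrt_re_inner (𝕜 := 𝕜), norm_eq_sqrt_re_inner (𝕜 := 𝕜),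
    inner_toEuclideanLin_conjTranspose_self, inner_toEuclideanLin_conjTranspose_self, h]

theorem toEuclideanLin_symm_mem_unitaryGroup [DecidableEq n]
    (V : EuclideanSpace 𝕜 n ≃ₗᵢ[𝕜] EuclideanSpace 𝕜 n) :
    toEuclideanLin.symm V.toLinearMap ∈ unitaryGroup n 𝕜 :=
  V.toMatrix_mem_unitaryGroup (EuclideanSpace.basisFun n 𝕜) (EuclideanSpace.basisFun n 𝕜)

theorem exists_mem_unitaryGroup_eq_mul_of_mul_conjTranspose_eq [DecidableEq m] [DecidableEq n]
    {A B : Matrix m n 𝕜} (h : A * Aᴴ = B * Bᴴ) : ∃ U ∈ unitaryGroup n 𝕜, B = A * U := by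
  obtain ⟨V, hV⟩ := LinearMap.exists_linearIsometryEquiv_apply_eq_of_norm_eq
    (toEuclideanLin Aᴴ) (toEuclideanLin Bᴴ) (norm_toEuclideanLin_conjTranspose_eq h)
  set W := toEuclideanLin.symm V.toLinearMap
  have hWA : W * Aᴴ = Bᴴ := toEuclideanLin.injective <| by
    rw [toLpLin_mul_same, LinearEquiv.apply_symm_apply]
    exact LinearMap.ext hV
  refine ⟨Wᴴ, Unitary.star_mem (toEuclideanLin_symm_mem_unitaryGroup V), ?_⟩
  rw [← conjTranspose_conjTranspose B, ← hWA, conjTranspose_mul, conjTranspose_conjTranspose]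

end Matrix

/-- Essential uniqueness of purification: two matrices with the same "reduced
state" `M Mᴴ = N Nᴴ` are related by a unitary on the purifying system. -/
theorem essential_uniqueness_of_purification (n m : ℕ)
    (M N : Matrix (Fin n) (Fin m) ℂ) (h : M * Mᴴ = N * Nᴴ) :
    ∃ U : Matrix (Fin m) (Fin m) ℂ,
      U ∈ Matrix.unitaryGroup (Fin m) ℂ ∧ N = M * U :=
  exists_mem_unitaryGroup_eq_mul_of_mul_conjTranspose_eq h
end

section
/- Every positive semidefinite n×n complex matrix ρ admits a purification: there exists a vector v : Fin n × Fin n → ℂ such that ρ_{ab} = ∑_{j} v_{(a,j)} · conj(v_{(b,j)}) for all a, b (i.e. ρ is the partial trace over the second factor of the rank-one matrix v vᴴ). Moreover, this purification is essentially unique: if v and w are two such purifications of the same ρ, then there exists an n×n unitary matrix U with w = (I_n ⊗ₖ U) v, where I_n ⊗ₖ U acts on Fin n × Fin n indexed vectors by (I_n ⊗ₖ U) v := fun (a,j) => ∑_{j'} U_{j j'} v_{(a,j')}. -/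
/-!
A positive semidefinite `ρ` factors as `B Bᴴ`, and the entries of `B` form a purification.
Conversely, a purification `v` is a square matrix `V` with `ρ = V Vᴴ`, so for two purifications
`V, W` the maps `x ↦ Vᴴ x` and `x ↦ Wᴴ x` have the same norms. Hence `Vᴴ x ↦ Wᴴ x` is a
well-defined isometry on the range of `Vᴴ`; in finite dimension it extends to a unitary `M`
with `Wᴴ = M Vᴴ`, i.e. `W = V Mᴴ`.
-/

open Matrix
open scoped ComplexOrder InnerProductSpace MatrixOrder

theorem LinearMap.exists_comp_rangeRestrict_eq_of_ker_le {R M N P : Type*} [Ring R]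
    [AddCommGroup M] [Module R M] [AddCommGroup N] [Module R N] [AddCommGroup P] [Module R P]
    {A : M →ₗ[R] N} {B : M →ₗ[R] P} (h : ker A ≤ ker B) :
    ∃ g : range A →ₗ[R] P, g ∘ₗ A.rangeRestrict = B :=
  ⟨(ker A).liftQ B h ∘ₗ A.quotKerEquivRange.symm.toLinearMap, by
    ext x
    simp [show A.rangeRestrict x = ⟨A x, mem_range_self A x⟩ from rfl,
      quotKerEquivRange_symm_apply_image]⟩

section

variable {𝕜 E F : Type*} [RCLike 𝕜] [AddCommGroup E] [Module 𝕜 E]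
  [NormedAddCommGroup F] [InnerProductSpace 𝕜 F] [FiniteDimensional 𝕜 F]

theorem LinearMap.exists_linearIsometry_comp_eq_of_norm_eq {A B : E →ₗ[𝕜] F}
    (h : ∀ x, ‖A x‖ = ‖B x‖) : ∃ T : F →ₗᵢ[𝕜] F, ∀ x, T (A x) = B x := by
  obtain ⟨g, hg⟩ := exists_comp_rangeRestrict_eq_of_ker_le (A := A) (B := B) fun x hx => by
    rw [mem_ker, ← norm_eq_zero, ← h, mem_ker.mp hx, norm_zero]
  have hg_apply (x : E) : g (A.rangeRestrict x) = B x := congr($hg x)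
  let L : range A →ₗᵢ[𝕜] F := ⟨g, by
    rintro ⟨_, x, rfl⟩
    exact (congrArg norm (hg_apply x)).trans (h x).symm⟩
  exact ⟨L.extend, fun x => (L.extend_apply (A.rangeRestrict x)).trans (hg_apply x)⟩

end

section

variable {𝕜 m n : Type*} [RCLike 𝕜] [Fintype m] [Fintype n] [DecidableEq m] [DecidableEq n]

theorem Matrix.inner_toEuclideanLin_conjTranspose (V : Matrix m n 𝕜)
    (x y : EuclideanSpace 𝕜 m) :
    ⟪toEuclideanLin Vᴴ x, toEuclideanLin Vᴴ y⟫_𝕜 = ⟪x, toEuclideanLin (V * Vᴴ) y⟫_𝕜 := by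
  rw [toLpLin_mul_same, LinearMap.comp_apply, toEuclideanLin_conjTranspose_eq_adjoint,
    LinearMap.adjoint_inner_left]

theorem LinearIsometry.toEuclideanLin_symm_mem_unitaryGroup
    (T : EuclideanSpace 𝕜 n →ₗᵢ[𝕜] EuclideanSpace 𝕜 n) :
    toEuclideanLin.symm T.toLinearMap ∈ unitaryGroup n 𝕜 := by
  rw [mem_unitaryGroup_iff', star_eq_conjTranspose]
  apply toEuclideanLin.injective
  rw [toLpLin_mul_same, toEuclideanLin_conjTranspose_eq_adjoint, LinearEquiv.apply_symm_apply]
  simp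

theorem Matrix.exists_mem_unitaryGroup_eq_mul_of_mul_conjTranspose_eq_s10 {V W : Matrix m n 𝕜}
    (h : V * Vᴴ = W * Wᴴ) : ∃ U ∈ unitaryGroup n 𝕜, W = V * U := by
  obtain ⟨T, hT⟩ := LinearMap.exists_linearIsometry_comp_eq_of_norm_eq
    (A := toEuclideanLin Vᴴ) (B := toEuclideanLin Wᴴ) fun x => by
      rw [← sq_eq_sq₀ (norm_nonneg _) (norm_nonneg _), ← inner_self_eq_norm_sq (𝕜 := 𝕜),
        ← inner_self_eq_norm_sq (𝕜 := 𝕜), inner_toEuclideanLin_conjTranspose,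
        inner_toEuclideanLin_conjTranspose, h]
  set M := toEuclideanLin.symm T.toLinearMap
  have hWM : Wᴴ = M * Vᴴ := toEuclideanLin.injective <| by
    ext1 x
    rw [toLpLin_mul_same, LinearMap.comp_apply, LinearEquiv.apply_symm_apply]
    exact (hT x).symm
  refine ⟨Mᴴ, Unitary.star_mem T.toEuclideanLin_symm_mem_unitaryGroup, ?_⟩
  rw [← conjTranspose_conjTranspose W, hWM, conjTranspose_mul, conjTranspose_conjTranspose]

end

theorem Matrix.PosSemidef.exists_eq_mul_conjTranspose {𝕜 n : Type*} [RCLike 𝕜] [Fintype n]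
    [DecidableEq n] {A : Matrix n n 𝕜} (hA : A.PosSemidef) : ∃ B : Matrix n n 𝕜, A = B * Bᴴ :=
  CStarAlgebra.nonneg_iff_eq_mul_star_self.mp hA.nonneg

/-- Every positive semidefinite complex matrix admits a purification, i.e. it is
the partial trace over the second factor of a rank-one matrix `v vᴴ`, and this
purification is essentially unique: any two purifications of the same matrix are
related by a unitary `I_n ⊗ₖ U` acting on the purifying (second) factor. -/
theorem purification_exists_and_essentially_unique (n : ℕ)
    (ρ : Matrix (Fin n) (Fin n) ℂ) (hρ : ρ.PosSemidef) :
    (∃ v : Fin n × Fin n → ℂ,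
      ∀ a b, ρ a b = ∑ j : Fin n, v (a, j) * (starRingEnd ℂ) (v (b, j))) ∧
    (∀ v w : Fin n × Fin n → ℂ,
      (∀ a b, ρ a b = ∑ j : Fin n, v (a, j) * (starRingEnd ℂ) (v (b, j))) →
      (∀ a b, ρ a b = ∑ j : Fin n, w (a, j) * (starRingEnd ℂ) (w (b, j))) →
      ∃ U : Matrix (Fin n) (Fin n) ℂ, U ∈ Matrix.unitaryGroup (Fin n) ℂ ∧
        w = fun p => ∑ j' : Fin n, U p.2 j' * v (p.1, j')) := by
  have purifies_iff (v : Fin n × Fin n → ℂ) :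
      (∀ a b, ρ a b = ∑ j : Fin n, v (a, j) * (starRingEnd ℂ) (v (b, j))) ↔
        ρ = of (Function.curry v) * (of (Function.curry v))ᴴ := by
    simp [← Matrix.ext_iff, mul_apply]
  refine ⟨?_, fun v w hv hw => ?_⟩
  · obtain ⟨B, hB⟩ := hρ.exists_eq_mul_conjTranspose
    exact ⟨Function.uncurry B, (purifies_iff _).mpr hB⟩
  · obtain ⟨U, hU, hWV⟩ := exists_mem_unitaryGroup_eq_mul_of_mul_conjTranspose_eq_s10
      (((purifies_iff v).mp hv).symm.trans ((purifies_iff w).mp hw))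
    refine ⟨Uᵀ, transpose_mem_unitaryGroup_iff.mpr hU, funext fun ⟨a, j⟩ => ?_⟩
    simpa [mul_apply, mul_comm] using congr($hWV a j)
end

section
/- In a symmetric monoidal category with a discarding structure, isomorphisms preserve purity of processes: if f : A ⟶ B is a pure morphism and T : B ⟶ C is an isomorphism, then f ≫ T : A ⟶ C is pure. -/
/-! Discarding is natural with respect to the kept system, so a dilation of `f ≫ T` followed by
`T⁻¹ ⊗ 𝟙` is a dilation of `f`. Purity of `f` then yields leaks `l` and `j`; the leak after
`f ≫ T` is the conjugate `T⁻¹ ≫ l ≫ (T ⊗ 𝟙)`, and the leak before is `j` itself. -/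

open CategoryTheory MonoidalCategory

/-- A discarding structure on a monoidal category: a discard morphism for every
object, compatible with tensor and trivial on the unit. -/
structure Discard (C : Type*) [Category C] [MonoidalCategory C] where
  d : ∀ X : C, X ⟶ 𝟙_ C
  d_tensor : ∀ X Y : C, d (X ⊗ Y) = (d X ⊗ₘ d Y) ≫ (λ_ (𝟙_ C)).hom
  d_unit : d (𝟙_ C) = 𝟙 (𝟙_ C)

variable {C : Type*} [Category C] [MonoidalCategory C]

/-- A leak on `A`: discarding the leaked system gives back the identity. -/
def IsLeak (D : Discard C) {A B : C} (l : A ⟶ A ⊗ B) : Prop :=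
  l ≫ (𝟙 A ⊗ₘ D.d B) ≫ (ρ_ A).hom = 𝟙 A

/-- A dilation of a morphism `f : A ⟶ B`: discarding the extra output gives
back `f`. -/
def IsDilation (D : Discard C) {A B E : C} (f : A ⟶ B) (Dm : A ⟶ B ⊗ E) : Prop :=
  Dm ≫ (𝟙 B ⊗ₘ D.d E) ≫ (ρ_ B).hom = f

/-- A morphism is pure if every dilation of it arises from a leak, and leaking
before equals leaking after. -/
def IsPure (D : Discard C) {A B : C} (f : A ⟶ B) : Prop :=
  ∀ (E : C) (Dm : A ⟶ B ⊗ E), IsDilation D f Dm →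
    ∃ (l : B ⟶ B ⊗ E) (j : A ⟶ A ⊗ E),
      IsLeak D l ∧ IsLeak D j ∧ Dm = f ≫ l ∧ Dm = j ≫ (f ⊗ₘ 𝟙 E)

lemma tensorHom_id_comp_discard (D : Discard C) {P Q E : C} (g : P ⟶ Q) :
    (g ⊗ₘ 𝟙 E) ≫ (𝟙 Q ⊗ₘ D.d E) ≫ (ρ_ Q).hom = (𝟙 P ⊗ₘ D.d E) ≫ (ρ_ P).hom ≫ g := by
  rw [tensorHom_comp_tensorHom_assoc, Category.comp_id, Category.id_comp,
    ← Category.id_comp g, ← Category.comp_id (D.d E), ← tensorHom_comp_tensorHom]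
  simp

lemma IsDilation.comp_tensorHom_id {D : Discard C} {A B B' E : C} {f : A ⟶ B}
    {Dm : A ⟶ B ⊗ E} (hDm : IsDilation D f Dm) (g : B ⟶ B') :
    IsDilation D (f ≫ g) (Dm ≫ (g ⊗ₘ 𝟙 E)) := by
  rw [IsDilation, Category.assoc, tensorHom_id_comp_discard, reassoc_of% hDm]

lemma IsLeak.conj {D : Discard C} {B X E : C} {l : B ⟶ B ⊗ E} (hl : IsLeak D l)
    {g : B ⟶ X} {h : X ⟶ B} (hhg : h ≫ g = 𝟙 X) :
    IsLeak D (h ≫ l ≫ (g ⊗ₘ 𝟙 E)) := by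
  rw [IsLeak, Category.assoc, Category.assoc, tensorHom_id_comp_discard,
    reassoc_of% hl, hhg]

theorem pure_comp_iso_general (D : Discard C) {A B X : C}
    (f : A ⟶ B) (hf : IsPure D f) (T : B ⟶ X) (hT : IsIso T) :
    IsPure D (f ≫ T) := by
  intro E Dm hDm
  obtain ⟨l, j, hl, hj, hDm_l, hDm_j⟩ :=
    hf E _ (by simpa only [Category.assoc, IsIso.hom_inv_id, Category.comp_id]
      using hDm.comp_tensorHom_id (inv T))
  have hDm_eq : Dm = (Dm ≫ (inv T ⊗ₘ 𝟙 E)) ≫ (T ⊗ₘ 𝟙 E) := by simp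
  refine ⟨inv T ≫ l ≫ (T ⊗ₘ 𝟙 E), j, hl.conj (IsIso.inv_hom_id T), hj, ?_, ?_⟩
  · rw [hDm_eq, hDm_l]
    simp
  · rw [hDm_eq, hDm_j]
    simp

/-- In a symmetric monoidal category with a discarding structure, isomorphisms
preserve purity: if `f` is pure and `T` is an isomorphism, then `f ≫ T` is pure. -/
theorem pure_comp_iso [SymmetricCategory C] (D : Discard C) {A B X : C}
    (f : A ⟶ B) (hf : IsPure D f) (T : B ⟶ X) (hT : IsIso T) :
    IsPure D (f ≫ T) :=
  pure_comp_iso_general D f hf T hT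
end

section
/- In a monoidal category, let A be an object equipped with a cup η : I ⟶ A ⊗ A and a cap ε : A ⊗ A ⟶ I satisfying the snake identities. If the cup separates, i.e. η = λ_I.inv ≫ (s ⊗ t) for some states s, t : I ⟶ A, then the identity on A factors through the tensor unit: there exist morphisms p : A ⟶ I and q : I ⟶ A with 𝟙_A = p ≫ q. (Hence any non-trivial theory with cups and caps must have correlations.) -/
open CategoryTheory MonoidalCategory

/-!
Substitute the separated cup `s ⊗ t` into the first snake identity. The state `s` does not
interact with the cap, so by the interchange law it slides past it: the snake becomes the effect
`(t ⊗ 𝟙) ≫ ε : A ⟶ 𝟙_ C` followed by the state `s`.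
-/

theorem snake_separatedCup_eq_comp {C : Type*} [Category C] [MonoidalCategory C] {X Y : C}
    (s : 𝟙_ C ⟶ X) (t : 𝟙_ C ⟶ Y) (ε : Y ⊗ X ⟶ 𝟙_ C) :
    (λ_ X).inv ≫ (((λ_ (𝟙_ C)).inv ≫ (s ⊗ₘ t)) ⊗ₘ 𝟙 X) ≫ (α_ X Y X).hom ≫
        (𝟙 X ⊗ₘ ε) ≫ (ρ_ X).hom =
      ((λ_ X).inv ≫ (t ⊗ₘ 𝟙 X) ≫ ε) ≫ s := by
  set e : 𝟙_ C ⊗ X ⟶ 𝟙_ C := (t ⊗ₘ 𝟙 X) ≫ ε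
  calc _ = (λ_ X).inv ≫ (λ_ (𝟙_ C)).inv ▷ X ≫ (α_ _ _ _).hom ≫ (s ⊗ₘ e) ≫ (ρ_ X).hom := by
        rw [comp_tensor_id, Category.assoc, associator_naturality_assoc,
          tensorHom_comp_tensorHom_assoc, Category.comp_id, tensorHom_id]
    _ = (λ_ X).inv ≫ (λ_ (𝟙_ C)).inv ▷ X ≫ (α_ _ _ _).hom ≫ 𝟙_ C ◁ e ≫ (ρ_ _).hom ≫ s := by
        rw [tensorHom_def', Category.assoc, rightUnitor_naturality]
    _ = ((λ_ X).inv ≫ e) ≫ s := by monoidal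

theorem separable_cup_trivialises_general
    {C : Type*} [Category C] [MonoidalCategory C] (A : C)
    (η : 𝟙_ C ⟶ A ⊗ A) (ε : A ⊗ A ⟶ 𝟙_ C)
    (snake₁ : (λ_ A).inv ≫ (η ⊗ₘ 𝟙 A) ≫ (α_ A A A).hom ≫ (𝟙 A ⊗ₘ ε) ≫ (ρ_ A).hom = 𝟙 A)
    (s t : 𝟙_ C ⟶ A) (hsep : η = (λ_ (𝟙_ C)).inv ≫ (s ⊗ₘ t)) :
    ∃ (p : A ⟶ 𝟙_ C) (q : 𝟙_ C ⟶ A), 𝟙 A = p ≫ q := by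
  refine ⟨(λ_ A).inv ≫ (t ⊗ₘ 𝟙 A) ≫ ε, s, ?_⟩
  rw [← snake_separatedCup_eq_comp, ← hsep, snake₁]

/-- In a monoidal category with cups and caps on `A` satisfying the snake
identities, if the cup separates into a product of two states then the identity
on `A` factors through the tensor unit (the theory is trivial on `A`). -/
theorem separable_cup_trivialises
    {C : Type*} [Category C] [MonoidalCategory C] (A : C)
    (η : 𝟙_ C ⟶ A ⊗ A) (ε : A ⊗ A ⟶ 𝟙_ C)
    (snake₁ : (λ_ A).inv ≫ (η ⊗ₘ 𝟙 A) ≫ (α_ A A A).hom ≫ (𝟙 A ⊗ₘ ε) ≫ (ρ_ A).hom = 𝟙 A)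
    (snake₂ : (ρ_ A).inv ≫ (𝟙 A ⊗ₘ η) ≫ (α_ A A A).inv ≫ (ε ⊗ₘ 𝟙 A) ≫ (λ_ A).hom = 𝟙 A)
    (s t : 𝟙_ C ⟶ A) (hsep : η = (λ_ (𝟙_ C)).inv ≫ (s ⊗ₘ t)) :
    ∃ (p : A ⟶ 𝟙_ C) (q : 𝟙_ C ⟶ A), 𝟙 A = p ≫ q :=
  separable_cup_trivialises_general A η ε snake₁ s t hsep
end

section
/- In a monoidal category with a discarding structure, let A be an object equipped with a cup η : I ⟶ A ⊗ A and a cap ε : A ⊗ A ⟶ I satisfying the snake identities. If the cap is causal, i.e. ε = (⨡_A ⊗ ⨡_A) ≫ λ_I.hom, then the identity on A factors as 𝟙_A = ⨡_A ≫ q for some state q : I ⟶ A. (Hence non-trivial causal subtheories cannot contain caps.) -/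
open CategoryTheory MonoidalCategory

/-- With a product cap the snake disconnects: by interchange, `e` slides below `η`. -/
theorem snake_comp_productCap_eq {C : Type*} [Category C] [MonoidalCategory C] {A X Y : C}
    (η : 𝟙_ C ⟶ X ⊗ Y) (e : A ⟶ 𝟙_ C) (e' : X ⟶ 𝟙_ C) :
    (ρ_ A).inv ≫ (𝟙 A ⊗ₘ η) ≫ (α_ A X Y).inv ≫ (((e ⊗ₘ e') ≫ (λ_ (𝟙_ C)).hom) ⊗ₘ 𝟙 Y) ≫
        (λ_ Y).hom =
      e ≫ η ≫ (e' ⊗ₘ 𝟙 Y) ≫ (λ_ Y).hom := by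
  simp only [comp_whiskerRight, MonoidalCategory.tensorHom_def, Category.assoc,
    whiskerLeft_id, id_whiskerRight, Category.id_comp, Category.comp_id]
  rw [← associator_inv_naturality_left_assoc, whisker_exchange_assoc,
    ← rightUnitor_inv_naturality_assoc, ← unitors_inv_equal]
  simp

theorem causal_cap_trivialises_general
    {C : Type*} [Category C] [MonoidalCategory C] (D : Discard C) (A : C)
    (η : 𝟙_ C ⟶ A ⊗ A) (ε : A ⊗ A ⟶ 𝟙_ C)
    (snake₂ : (ρ_ A).inv ≫ (𝟙 A ⊗ₘ η) ≫ (α_ A A A).inv ≫ (ε ⊗ₘ 𝟙 A) ≫ (λ_ A).hom = 𝟙 A)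
    (hcausal : ε = (D.d A ⊗ₘ D.d A) ≫ (λ_ (𝟙_ C)).hom) :
    ∃ q : 𝟙_ C ⟶ A, 𝟙 A = D.d A ≫ q :=
  ⟨η ≫ (D.d A ⊗ₘ 𝟙 A) ≫ (λ_ A).hom, by rw [← snake_comp_productCap_eq, ← hcausal, snake₂]⟩

/-- In a monoidal category with a discarding structure and cups and caps on `A`
satisfying the snake identities, if the cap is causal then the identity on `A`
factors through discarding; hence non-trivial causal subtheories cannot contain
caps. -/
theorem causal_cap_trivialises
    {C : Type*} [Category C] [MonoidalCategory C] (D : Discard C) (A : C)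
    (η : 𝟙_ C ⟶ A ⊗ A) (ε : A ⊗ A ⟶ 𝟙_ C)
    (snake₁ : (λ_ A).inv ≫ (η ⊗ₘ 𝟙 A) ≫ (α_ A A A).hom ≫ (𝟙 A ⊗ₘ ε) ≫ (ρ_ A).hom = 𝟙 A)
    (snake₂ : (ρ_ A).inv ≫ (𝟙 A ⊗ₘ η) ≫ (α_ A A A).inv ≫ (ε ⊗ₘ 𝟙 A) ≫ (λ_ A).hom = 𝟙 A)
    (hcausal : ε = (D.d A ⊗ₘ D.d A) ≫ (λ_ (𝟙_ C)).hom) :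
    ∃ q : 𝟙_ C ⟶ A, 𝟙 A = D.d A ≫ q :=
  causal_cap_trivialises_general D A η ε snake₂ hcausal
end
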